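/- arXiv:1501.03349 — 2 statements merged into one kernel-verified Lean document; each statement's English description precedes it below -/
import Mathlib

section
/- Two points of ℂ² have the same image under the complex Hopf map h(z₁,z₂) = (|z₁|² − |z₂|², 2·conj(z₁)·z₂) if and only if they lie in the same orbit of the diagonal circle action; that is, h(z₁,z₂) = h(w₁,w₂) if and only if there exists ζ ∈ ℂ with |ζ| = 1 and (w₁,w₂) = (ζz₁, ζz₂). -/
/-- The complex Hopf map `h(z₁,z₂) = (|z₁|² − |z₂|², 2 conj(z₁) z₂)`. -/
noncomputable def hopfMap (z : ℂ × ℂ) : ℝ × ℂ :=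
  (‖z.1‖ ^ 2 - ‖z.2‖ ^ 2, 2 * (starRingEnd ℂ) z.1 * z.2)

/-!
The identity `(|z₁|² − |z₂|²)² + |2 conj(z₁) z₂|² = (|z₁|² + |z₂|²)²` shows that the Hopf image
determines `|z₁|² + |z₂|²`, hence both `|z₁|` and `|z₂|`. When `z₁ ≠ 0` the phase `ζ = w₁ / z₁` then
also carries `z₂` to `w₂`, because `conj z₁ · z₂ = conj w₁ · w₂ = conj ζ · conj z₁ · w₂`.
-/

open ComplexConjugate

theorem Complex.exists_norm_eq_one_mul_eq {a c : ℂ} (h : ‖a‖ = ‖c‖) :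
    ∃ ζ : ℂ, ‖ζ‖ = 1 ∧ c = ζ * a := by
  rcases eq_or_ne a 0 with rfl | ha
  · exact ⟨1, norm_one, by simpa using h.symm⟩
  · refine ⟨c / a, ?_, (div_mul_cancel₀ c ha).symm⟩
    rw [norm_div, ← h, div_self (norm_ne_zero_iff.mpr ha)]

theorem Complex.exists_norm_eq_one_mul_eq_mul_eq {a b c d : ℂ} (hac : ‖a‖ = ‖c‖)
    (hbd : ‖b‖ = ‖d‖) (habcd : conj a * b = conj c * d) :
    ∃ ζ : ℂ, ‖ζ‖ = 1 ∧ c = ζ * a ∧ d = ζ * b := by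
  rcases eq_or_ne a 0 with rfl | ha
  · obtain ⟨ζ, hζ, rfl⟩ := exists_norm_eq_one_mul_eq hbd
    exact ⟨ζ, hζ, by simpa [eq_comm] using hac, rfl⟩
  obtain ⟨ζ, hζ, rfl⟩ := exists_norm_eq_one_mul_eq hac
  have hζζ : ζ * conj ζ = 1 := by simp [Complex.mul_conj', hζ]
  have hb : b = conj ζ * d := by
    apply mul_left_cancel₀ ((map_ne_zero conj).mpr ha)
    rw [habcd, map_mul]
    ring
  refine ⟨ζ, hζ, rfl, ?_⟩
  rw [hb, ← mul_assoc, hζζ, one_mul]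

theorem hopfMap_smul (ζ : ℂ) (z : ℂ × ℂ) : hopfMap (ζ • z) = ‖ζ‖ ^ 2 • hopfMap z := by
  simp only [hopfMap, Prod.smul_fst, Prod.smul_snd, smul_eq_mul, Prod.smul_mk, map_mul,
    norm_mul, Complex.real_smul, Complex.ofReal_pow, ← Complex.conj_mul']
  congr 1 <;> ring

theorem fst_hopfMap_sq_add_norm_snd_hopfMap_sq (z : ℂ × ℂ) :
    (hopfMap z).1 ^ 2 + ‖(hopfMap z).2‖ ^ 2 = (‖z.1‖ ^ 2 + ‖z.2‖ ^ 2) ^ 2 := by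
  simp only [hopfMap, norm_mul, Complex.norm_conj, Complex.norm_ofNat]
  ring

theorem norm_eq_of_hopfMap_eq {z w : ℂ × ℂ} (h : hopfMap z = hopfMap w) :
    ‖z.1‖ = ‖w.1‖ ∧ ‖z.2‖ = ‖w.2‖ := by
  have hsum : ‖z.1‖ ^ 2 + ‖z.2‖ ^ 2 = ‖w.1‖ ^ 2 + ‖w.2‖ ^ 2 := by
    have := fst_hopfMap_sq_add_norm_snd_hopfMap_sq z
    rw [h, fst_hopfMap_sq_add_norm_snd_hopfMap_sq w] at this
    exact (pow_left_inj₀ (by positivity) (by positivity) two_ne_zero).mp this.symm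
  have hdiff : ‖z.1‖ ^ 2 - ‖z.2‖ ^ 2 = ‖w.1‖ ^ 2 - ‖w.2‖ ^ 2 := congrArg Prod.fst h
  constructor <;> refine (pow_left_inj₀ (norm_nonneg _) (norm_nonneg _) two_ne_zero).mp ?_ <;>
    linarith

/-- Two points of `ℂ²` have the same Hopf image iff they lie in the same orbit
of the diagonal circle action. -/
theorem hopfMap_eq_iff_orbit (z w : ℂ × ℂ) :
    hopfMap z = hopfMap w ↔
      ∃ ζ : ℂ, ‖ζ‖ = 1 ∧ w = (ζ * z.1, ζ * z.2) := by
  constructor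
  · intro h
    obtain ⟨h₁, h₂⟩ := norm_eq_of_hopfMap_eq h
    have hconj : conj z.1 * z.2 = conj w.1 * w.2 := by
      simpa [hopfMap, mul_assoc] using congrArg Prod.snd h
    obtain ⟨ζ, hζ, hw₁, hw₂⟩ := Complex.exists_norm_eq_one_mul_eq_mul_eq h₁ h₂ hconj
    exact ⟨ζ, hζ, Prod.ext hw₁ hw₂⟩
  · rintro ⟨ζ, hζ, rfl⟩
    change hopfMap z = hopfMap (ζ • z)
    simp [hopfMap_smul, hζ]
end

section
/- For the complex Hopf map h : ℝ⁴ ≅ ℂ² → ℝ³ ≅ ℝ × ℂ, h(z₁,z₂) = (|z₁|² − |z₂|², 2·conj(z₁)·z₂), and any twice continuously differentiable function v : ℝ³ → ℝ, the composition u = v ∘ h satisfies Δu(z) = 4‖z‖² · (Δv)(h(z)) for all z ∈ ℂ², where Δ denotes the Euclidean Laplacian in ℝ⁴ and ℝ³ respectively. -/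
/-!
Since `h` is quadratic, `h (z + t e) = h z + t (Dh z) e + t² h e`, so the second derivative of
`v ∘ h` along `e` is `D²v (Dh z e) (Dh z e) + 2 Dv (h e)`. Summing over an orthonormal frame of
`ℝ⁴`, the first-order terms cancel because `∑ h eᵢ = 0` (the components of `h` are harmonic),
and the second-order terms give `tr (Jᵀ D²v J) = tr (D²v J Jᵀ) = 4‖z‖² Δv`, because the
Jacobian `J` of `h` satisfies `J Jᵀ = 4‖z‖² I` (`h` is horizontally conformal).
-/

/-- The second derivative at `0` of `t ↦ u (p + t e)`, i.e. the second
directional derivative of `u` at `p` in the direction `e`. -/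
noncomputable def secondDerivAlong {E : Type*} [NormedAddCommGroup E]
    [NormedSpace ℝ E] (u : E → ℝ) (p e : E) : ℝ :=
  deriv (deriv (fun t : ℝ => u (p + t • e))) 0

/-- The Euclidean Laplacian on `ℝ × ℂ ≅ ℝ³`. -/
noncomputable def lap3 (v : ℝ × ℂ → ℝ) (p : ℝ × ℂ) : ℝ :=
  secondDerivAlong v p (1, 0) + secondDerivAlong v p (0, 1) +
    secondDerivAlong v p (0, Complex.I)

/-- The Euclidean Laplacian on `ℂ × ℂ ≅ ℝ⁴`. -/
noncomputable def lap4 (u : ℂ × ℂ → ℝ) (p : ℂ × ℂ) : ℝ :=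
  secondDerivAlong u p (1, 0) + secondDerivAlong u p (Complex.I, 0) +
    secondDerivAlong u p (0, 1) + secondDerivAlong u p (0, Complex.I)

open Complex ComplexConjugate

theorem LinearMap.BilinForm.sum_apply_self_eq_mul_sum_apply_basis {R M ι κ : Type*}
    [CommSemiring R] [AddCommMonoid M] [Module R M] [Fintype ι] [Fintype κ] [DecidableEq κ]
    (B : LinearMap.BilinForm R M) (b : Module.Basis κ R M) (a : ι → M) (c : R)
    (ha : ∀ j k, ∑ i, b.repr (a i) j * b.repr (a i) k = if j = k then c else 0) :
    ∑ i, B (a i) (a i) = c * ∑ j, B (b j) (b j) := by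
  have hexp (x : M) : B x x = ∑ j, ∑ k, b.repr x j * b.repr x k * B (b j) (b k) := by
    conv_lhs => rw [← b.sum_repr x]
    simp only [map_sum, map_smul, LinearMap.sum_apply, LinearMap.smul_apply, smul_eq_mul,
      Finset.mul_sum]
    rw [Finset.sum_comm]
    exact Finset.sum_congr rfl fun _ _ => Finset.sum_congr rfl fun _ _ => by ring
  calc ∑ i, B (a i) (a i)
      = ∑ j, ∑ k, (∑ i, b.repr (a i) j * b.repr (a i) k) * B (b j) (b k) := by
        simp only [hexp, Finset.sum_mul]
        rw [Finset.sum_comm]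
        exact Finset.sum_congr rfl fun _ _ => Finset.sum_comm
    _ = c * ∑ j, B (b j) (b j) := by
        simp only [ha, ite_mul, zero_mul, Finset.sum_ite_eq, Finset.mem_univ, if_true,
          Finset.mul_sum]

theorem deriv_deriv_comp_add_smul_add_sq_smul {E F : Type*} [NormedAddCommGroup E]
    [NormedSpace ℝ E] [NormedAddCommGroup F] [NormedSpace ℝ F] {f : E → F}
    (hf : ContDiff ℝ 2 f) (p a b : E) :
    deriv (deriv fun t : ℝ => f (p + t • a + t ^ 2 • b)) 0
      = fderiv ℝ (fderiv ℝ f) p a a + (2 : ℝ) • fderiv ℝ f p b := by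
  set γ : ℝ → E := fun t => p + t • a + t ^ 2 • b
  have hγ (t : ℝ) : HasDerivAt γ (a + (2 * t) • b) t := by
    refine ((((hasDerivAt_id t).smul_const a).const_add p).fun_add
      ((hasDerivAt_pow 2 t).smul_const b)).congr_deriv ?_
    simp
  have hγ0 : γ 0 = p := by simp [γ]
  have hdf : Differentiable ℝ f := hf.differentiable two_ne_zero
  have hd2f : Differentiable ℝ (fderiv ℝ f) :=
    (hf.fderiv_right (m := 1) le_rfl).differentiable one_ne_zero
  have hderiv : deriv (fun t => f (γ t)) = fun t => fderiv ℝ f (γ t) (a + (2 * t) • b) :=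
    funext fun t => ((hdf (γ t)).hasFDerivAt.comp_hasDerivAt t (hγ t)).deriv
  have houter : HasDerivAt (fun t => fderiv ℝ f (γ t)) (fderiv ℝ (fderiv ℝ f) p a) 0 := by
    have := (hd2f (γ 0)).hasFDerivAt.comp_hasDerivAt 0 (hγ 0)
    simp only [hγ0, mul_zero, zero_smul, add_zero] at this
    exact this
  have hinner : HasDerivAt (fun t : ℝ => a + (2 * t) • b) ((2 : ℝ) • b) 0 := by
    simpa using (((hasDerivAt_id (0 : ℝ)).const_mul 2).smul_const b).const_add a
  rw [hderiv, (houter.clm_apply hinner).deriv]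
  simp [hγ0]

theorem secondDerivAlong_eq_fderiv_fderiv {E : Type*} [NormedAddCommGroup E]
    [NormedSpace ℝ E] {u : E → ℝ} (hu : ContDiff ℝ 2 u) (p e : E) :
    secondDerivAlong u p e = fderiv ℝ (fderiv ℝ u) p e e := by
  unfold secondDerivAlong
  simpa using deriv_deriv_comp_add_smul_add_sq_smul hu p e 0

noncomputable def hopfPolar (z w : ℂ × ℂ) : ℝ × ℂ :=
  (2 * (conj z.1 * w.1).re - 2 * (conj z.2 * w.2).re, 2 * (conj z.1 * w.2 + conj w.1 * z.2))

theorem hopfMap_add_smul (z w : ℂ × ℂ) (t : ℝ) :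
    hopfMap (z + t • w) = hopfMap z + t • hopfPolar z w + t ^ 2 • hopfMap w := by
  simp only [hopfMap, Complex.sq_norm]
  ext <;> simp [hopfPolar, normSq_apply, sq] <;> ring

noncomputable def stdFrameC2 : Fin 4 → ℂ × ℂ := ![(1, 0), (I, 0), (0, 1), (0, I)]

noncomputable def stdBasisRC : Module.Basis (Unit ⊕ Fin 2) ℝ (ℝ × ℂ) :=
  (Module.Basis.singleton Unit ℝ).prod basisOneI

theorem lap4_eq_sum (u : ℂ × ℂ → ℝ) (p : ℂ × ℂ) :
    lap4 u p = ∑ i, secondDerivAlong u p (stdFrameC2 i) := by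
  simp [lap4, stdFrameC2, Fin.sum_univ_four]

theorem lap3_eq_sum (v : ℝ × ℂ → ℝ) (p : ℝ × ℂ) :
    lap3 v p = ∑ j, secondDerivAlong v p (stdBasisRC j) := by
  simp [lap3, stdBasisRC, Fin.sum_univ_two, add_assoc]

theorem sum_hopfMap_stdFrameC2 : ∑ i, hopfMap (stdFrameC2 i) = 0 := by
  simp [hopfMap, stdFrameC2, Fin.sum_univ_four]

theorem sum_repr_hopfPolar_mul_repr_hopfPolar (z : ℂ × ℂ) (j k : Unit ⊕ Fin 2) :
    ∑ i, stdBasisRC.repr (hopfPolar z (stdFrameC2 i)) j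
        * stdBasisRC.repr (hopfPolar z (stdFrameC2 i)) k
      = if j = k then 4 * (‖z.1‖ ^ 2 + ‖z.2‖ ^ 2) else 0 := by
  simp only [Complex.sq_norm, normSq_apply]
  rcases j with _ | j <;> rcases k with _ | k <;> (try fin_cases j) <;> (try fin_cases k) <;>
    simp [stdBasisRC, hopfPolar, stdFrameC2, Fin.sum_univ_four] <;> ring

/-- The Hopf map is a harmonic morphism with dilation `4‖z‖²`:
`Δ(v ∘ h)(z) = 4‖z‖²·(Δv)(h(z))` for every `C²` function `v : ℝ³ → ℝ`. -/
theorem lap4_comp_hopfMap (v : ℝ × ℂ → ℝ) (hv : ContDiff ℝ 2 v) (z : ℂ × ℂ) :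
    lap4 (fun w => v (hopfMap w)) z
      = 4 * (‖z.1‖ ^ 2 + ‖z.2‖ ^ 2) * lap3 v (hopfMap z) := by
  set B := fderiv ℝ (fderiv ℝ v) (hopfMap z)
  have hdir (w : ℂ × ℂ) : secondDerivAlong (fun w => v (hopfMap w)) z w
      = B (hopfPolar z w) (hopfPolar z w) + (2 : ℝ) • fderiv ℝ v (hopfMap z) (hopfMap w) := by
    simpa only [secondDerivAlong, hopfMap_add_smul]
      using deriv_deriv_comp_add_smul_add_sq_smul hv _ _ _
  calc lap4 (fun w => v (hopfMap w)) z
      = ∑ i, B (hopfPolar z (stdFrameC2 i)) (hopfPolar z (stdFrameC2 i)) := by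
        simp only [lap4_eq_sum, hdir, Finset.sum_add_distrib, ← Finset.smul_sum, ← map_sum,
          sum_hopfMap_stdFrameC2, map_zero, smul_zero, add_zero]
    _ = 4 * (‖z.1‖ ^ 2 + ‖z.2‖ ^ 2) * ∑ j, B (stdBasisRC j) (stdBasisRC j) :=
        LinearMap.BilinForm.sum_apply_self_eq_mul_sum_apply_basis B.toLinearMap₁₂ stdBasisRC _ _
          (sum_repr_hopfPolar_mul_repr_hopfPolar z)
    _ = 4 * (‖z.1‖ ^ 2 + ‖z.2‖ ^ 2) * lap3 v (hopfMap z) := by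
        simp only [lap3_eq_sum, secondDerivAlong_eq_fderiv_fderiv hv, B]
end
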